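/- arXiv:2103.15176 — 3 statements merged into one kernel-verified Lean document; each statement's English description precedes it below -/
import Mathlib

section
/- Let X be a d-regular connected graph on n vertices with adjacency matrix A whose nontrivial eigenvalues all satisfy |λ| ≤ λ < d, and let P be a polynomial of degree ℓ. Then (P(d)/n)² · N_x(ℓ) ≤ max over nontrivial eigenvalues λ_j of |P(λ_j)|², where N_x(ℓ) is the number of vertices y with graph distance d(x,y) > ℓ. -/
open Polynomial Matrix Finset

lemma aux_aeval_mulVec {m : Type*} [Fintype m] [DecidableEq m]
    (A : Matrix m m ℝ) (v : m → ℝ) (μ : ℝ) (h : A.mulVec v = μ • v)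
    (P : Polynomial ℝ) : ((Polynomial.aeval A) P).mulVec v = P.eval μ • v := by
  have hpow : ∀ k : ℕ, (A ^ k).mulVec v = μ ^ k • v := by
    intro k
    induction k with
    | zero => simp
    | succ k ih =>
      rw [pow_succ', ← Matrix.mulVec_mulVec, ih, Matrix.mulVec_smul, h,
        smul_smul, pow_succ', mul_comm]
  induction P using Polynomial.induction_on' with
  | add p q hp hq =>
    simp [map_add, Matrix.add_mulVec, hp, hq, add_smul]
  | monomial k c =>
    rw [Polynomial.aeval_monomial, Polynomial.eval_monomial]
    rw [show (algebraMap ℝ (Matrix m m ℝ)) c * A ^ k = c • A ^ k by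
      rw [Algebra.algebraMap_eq_smul_one, smul_mul_assoc, one_mul]]
    rw [Matrix.smul_mulVec, hpow, smul_smul]

theorem almost_diameter_key_lemma (n d : ℕ) (hn : 2 ≤ n)
    (z0 : Fin n) (hz0 : (z0 : ℕ) = 0)
    (G : SimpleGraph (Fin n)) [DecidableRel G.Adj]
    (hreg : G.IsRegularOfDegree d) (hconn : G.Connected)
    (lamBound : ℝ) (hlam : lamBound < d)
    (f : Fin n → Fin n → ℝ) (lam : Fin n → ℝ)
    (heig : ∀ j, (G.adjMatrix ℝ).mulVec (f j) = lam j • f j)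
    (horth : ∀ i j, ∑ x, f i x * f j x = if i = j then (1 : ℝ) else 0)
    (hf0 : ∀ x, f z0 x = 1 / Real.sqrt n)
    (hlam0 : lam z0 = d)
    (hsmall : ∀ j : Fin n, j ≠ z0 → |lam j| ≤ lamBound)
    (P : Polynomial ℝ) (ℓ : ℕ) (hdeg : P.natDegree = ℓ) (x : Fin n) :
    (P.eval (d : ℝ) / n) ^ 2 * ((Finset.univ.filter fun y => ℓ < G.dist x y).card : ℝ) ≤
      (Finset.univ.erase z0).sup' (by
        refine Finset.nonempty_iff_ne_empty.mpr ?_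
        intro h
        have h1 : (Finset.univ.erase z0).card = n - 1 := by
          simp [Finset.card_erase_of_mem]
        rw [h] at h1
        simp at h1
        omega) (fun j => |P.eval (lam j)| ^ 2) := by
  set A := G.adjMatrix ℝ with hA
  set M := (Polynomial.aeval A) P with hM
  set s := Finset.univ.erase z0 with hs
  have hn0 : (0:ℝ) < (n:ℝ) := by positivity
  -- column orthonormality
  have hcol : ∀ z y : Fin n, ∑ j, f j z * f j y = if z = y then (1:ℝ) else 0 := by
    have h1 : (Matrix.of f) * (Matrix.of f)ᵀ = 1 := by
      ext i j
      simpa [Matrix.mul_apply, Matrix.one_apply] using horth i j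
    have h2 : (Matrix.of f)ᵀ * (Matrix.of f) = 1 := mul_eq_one_comm.mp h1
    intro z y
    have h3 := congrFun (congrFun h2 z) y
    simpa [Matrix.mul_apply, Matrix.one_apply] using h3
  -- eigenvector property for M
  have hMv : ∀ j, M.mulVec (f j) = P.eval (lam j) • f j := fun j =>
    aux_aeval_mulVec A (f j) (lam j) (heig j) P
  -- spectral expansion of M entries
  have hspec : ∀ y : Fin n, M x y = ∑ j, P.eval (lam j) * (f j x * f j y) := by
    intro y
    calc M x y = ∑ z, M x z * (if z = y then (1:ℝ) else 0) := by simp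
      _ = ∑ z, M x z * ∑ j, f j z * f j y := by simp_rw [hcol]
      _ = ∑ z, ∑ j, M x z * (f j z * f j y) := by simp_rw [Finset.mul_sum]
      _ = ∑ j, ∑ z, M x z * (f j z * f j y) := Finset.sum_comm
      _ = ∑ j, (∑ z, M x z * f j z) * f j y := by
          congr 1; ext j; rw [Finset.sum_mul]; congr 1; ext z; ring
      _ = ∑ j, P.eval (lam j) * (f j x * f j y) := by
          congr 1; ext j
          have : ∑ z, M x z * f j z = (M.mulVec (f j)) x := rfl
          rw [this, hMv j]
          simp only [Pi.smul_apply, smul_eq_mul]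
          ring
  -- vanishing of entries beyond distance ℓ
  have hzero : ∀ y : Fin n, ℓ < G.dist x y → M x y = 0 := by
    intro y h
    have hz : ∀ i : ℕ, i ≤ ℓ → (A ^ i) x y = 0 := by
      intro i hi
      rw [hA, SimpleGraph.adjMatrix_pow_apply_eq_card_walk]
      have : IsEmpty { p : G.Walk x y | p.length = i } := by
        constructor
        rintro ⟨p, hp⟩
        have := SimpleGraph.dist_le p
        simp only [Set.mem_setOf_eq] at hp
        omega
      exact_mod_cast Nat.cast_eq_zero.mpr Fintype.card_eq_zero
    rw [hM, Polynomial.aeval_eq_sum_range, Matrix.sum_apply]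
    apply Finset.sum_eq_zero
    intro i hi
    simp only [Matrix.smul_apply]
    rw [hz i (by simp only [Finset.mem_range, hdeg] at hi; omega)]
    simp
  -- the key identity per bad vertex
  have hfrac : ∀ y : Fin n, f z0 x * f z0 y = 1 / n := by
    intro y
    rw [hf0, hf0]
    rw [div_mul_div_comm, one_mul, Real.mul_self_sqrt (by positivity)]
  have hkey : ∀ y : Fin n, ℓ < G.dist x y →
      ∑ j ∈ s, P.eval (lam j) * (f j x * f j y) = -(P.eval (d:ℝ) / n) := by
    intro y h
    have h1 := hspec y
    rw [hzero y h] at h1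
    have h2 : ∑ j, P.eval (lam j) * (f j x * f j y)
        = P.eval (lam z0) * (f z0 x * f z0 y) + ∑ j ∈ s, P.eval (lam j) * (f j x * f j y) := by
      rw [hs]
      exact (Finset.add_sum_erase _ _ (Finset.mem_univ z0)).symm
    rw [← h1] at h2
    rw [hlam0, hfrac y] at h2
    field_simp at h2 ⊢
    linarith
  -- sum of squares identity
  set W : ℝ := ∑ j ∈ s, (P.eval (lam j))^2 * (f j x)^2 with hW
  have hsq : ∀ y : Fin n,
      (∑ j ∈ s, P.eval (lam j) * (f j x * f j y))^2
      = ∑ j ∈ s, ∑ k ∈ s, (P.eval (lam j) * f j x) * (P.eval (lam k) * f k x) * (f j y * f k y) := by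
    intro y
    rw [sq, Finset.sum_mul_sum]
    congr 1; ext j; congr 1; ext k; ring
  have hWsum : ∑ y, (∑ j ∈ s, P.eval (lam j) * (f j x * f j y))^2 = W := by
    simp_rw [hsq]
    rw [Finset.sum_comm]
    have : ∀ j ∈ s, ∑ y, ∑ k ∈ s, (P.eval (lam j) * f j x) * (P.eval (lam k) * f k x) * (f j y * f k y)
        = (P.eval (lam j))^2 * (f j x)^2 := by
      intro j hj
      rw [Finset.sum_comm]
      have h4 : ∀ k ∈ s, ∑ y, (P.eval (lam j) * f j x) * (P.eval (lam k) * f k x) * (f j y * f k y)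
          = if j = k then (P.eval (lam j))^2 * (f j x)^2 else 0 := by
        intro k hk
        rw [← Finset.mul_sum]
        have h5 : ∑ y, f j y * f k y = if j = k then (1:ℝ) else 0 := horth j k
        rw [h5]
        by_cases hjk : j = k
        · subst hjk; simp; ring
        · simp [hjk]
      rw [Finset.sum_congr rfl h4, Finset.sum_ite_eq s j
        (fun _ => (P.eval (lam j))^2 * (f j x)^2)]
      simp [hj]
    rw [Finset.sum_congr rfl this]
  -- lower bound on W from bad vertices
  have hlow : (P.eval (d : ℝ) / n) ^ 2 * ((Finset.univ.filter fun y => ℓ < G.dist x y).card : ℝ) ≤ W := by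
    rw [← hWsum]
    calc (P.eval (d : ℝ) / n) ^ 2 * ((Finset.univ.filter fun y => ℓ < G.dist x y).card : ℝ)
        = ∑ y ∈ Finset.univ.filter (fun y => ℓ < G.dist x y),
            (∑ j ∈ s, P.eval (lam j) * (f j x * f j y))^2 := by
          have h7 : ∀ y ∈ Finset.univ.filter (fun y => ℓ < G.dist x y),
              (∑ j ∈ s, P.eval (lam j) * (f j x * f j y))^2 = (P.eval (d:ℝ)/n)^2 := by
            intro y hy
            rw [hkey y (by simpa using hy), neg_sq]
          rw [Finset.sum_congr rfl h7, Finset.sum_const, nsmul_eq_mul, mul_comm]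
      _ ≤ ∑ y, (∑ j ∈ s, P.eval (lam j) * (f j x * f j y))^2 :=
          Finset.sum_le_sum_of_subset_of_nonneg (Finset.filter_subset _ _)
            (fun y _ _ => sq_nonneg _)
  -- upper bound on W
  have hsum1 : ∑ j ∈ s, (f j x)^2 ≤ 1 := by
    have h6 : ∑ j, (f j x)^2 = 1 := by
      have h7 := hcol x x
      rw [if_pos rfl] at h7
      calc ∑ j, (f j x)^2 = ∑ j, f j x * f j x := by simp_rw [pow_two]
        _ = 1 := h7
    calc ∑ j ∈ s, (f j x)^2 ≤ ∑ j, (f j x)^2 :=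
        Finset.sum_le_sum_of_subset_of_nonneg (Finset.subset_univ _)
          (fun j _ _ => sq_nonneg _)
      _ = 1 := h6
  have hhigh : ∀ hne : s.Nonempty, W ≤ s.sup' hne (fun j => |P.eval (lam j)|^2) := by
    intro hne
    set B := s.sup' hne (fun j => |P.eval (lam j)|^2) with hB
    have hBnonneg : 0 ≤ B := by
      obtain ⟨j, hj⟩ := hne
      exact le_trans (sq_nonneg _) (Finset.le_sup' (fun j => |P.eval (lam j)|^2) hj)
    calc W ≤ ∑ j ∈ s, B * (f j x)^2 := by
          apply Finset.sum_le_sum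
          intro j hj
          apply mul_le_mul_of_nonneg_right _ (sq_nonneg _)
          calc (P.eval (lam j))^2 = |P.eval (lam j)|^2 := (sq_abs _).symm
            _ ≤ B := Finset.le_sup' (fun j => |P.eval (lam j)|^2) hj
      _ = B * ∑ j ∈ s, (f j x)^2 := by rw [Finset.mul_sum]
      _ ≤ B * 1 := mul_le_mul_of_nonneg_left hsum1 hBnonneg
      _ = B := mul_one B
  exact le_trans hlow (hhigh _)
end

section
/- Let A be the adjacency matrix of a d-regular graph, d = p + 1, and K_t the non-backtracking walk count matrix. Then K_t = Q_t(A), where Q_t(x) = p^{t/2}(((p−1)/p)·U_t(x/(2√p)) + (2/p)·T_t(x/(2√p))) for t ≥ 2. -/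
/-!
Extend a non-backtracking walk of length `n + 1` from `x` by one step to a neighbour `y` of its
endpoint. Either the result is non-backtracking, or it returns to the vertex `y` visited one step
earlier; walks of the second kind come from the non-backtracking walks of length `n` from `x` to
`y`, each of which has `p` non-backtracking one-step continuations in a `(p + 1)`-regular graph
(`p + 1` when `n = 0`). Hence `K_1 = A`, `K_2 = A² - (p + 1) I` and
`K_{n+2} = K_{n+1} A - p K_n` for `n ≥ 1`. The Chebyshev recurrences give
`Q_{n+2} = Q_{n+1} X - p Q_n` with `Q_0 = (p + 1) / p` and `Q_1 = X`, so `Q_t(A)` satisfies the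
same recurrence with the same initial values.
-/

open Polynomial Matrix Finset

/-- The number of non-backtracking walks of length `t` from `x` to `y` in `G`. -/
def nbWalkCount {V : Type} [Fintype V] [DecidableEq V] (G : SimpleGraph V)
    [DecidableRel G.Adj] (t : ℕ) (x y : V) : ℕ :=
  (Finset.univ.filter fun f : Fin (t + 1) → V =>
    f ⟨0, Nat.succ_pos t⟩ = x ∧ f ⟨t, Nat.lt_succ_self t⟩ = y ∧
      (∀ i : Fin t, G.Adj (f ⟨i.1, by omega⟩) (f ⟨i.1 + 1, by omega⟩)) ∧
      (∀ i : Fin (t - 1), f ⟨i.1, by have := i.2; omega⟩ ≠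
        f ⟨i.1 + 2, by have := i.2; omega⟩)).card

theorem Fin.card_filter_snoc {α : Type*} [Fintype α] {n : ℕ} (P : (Fin (n + 1) → α) → Prop)
    [DecidablePred P] :
    #{f | P f} = ∑ g : Fin n → α, #{a | P (Fin.snoc g a)} := by
  simp only [card_filter]
  rw [← (Fin.snocEquiv fun _ => α).sum_comp, Fintype.sum_prod_type_right]
  rfl

theorem Fin.card_filter_fin_one {α : Type*} [Fintype α] (P : α → Prop) [DecidablePred P] :
    #{f : Fin 1 → α | P (f 0)} = #{a | P a} :=
  card_equiv (Equiv.funUnique (Fin 1) α) (by simp)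

namespace SimpleGraph

section Walks

variable {V : Type*} (G : SimpleGraph V)

def IsNBWalk {n : ℕ} (f : Fin n → V) : Prop :=
  (∀ i j : Fin n, (j : ℕ) = i + 1 → G.Adj (f i) (f j)) ∧
    ∀ i j : Fin n, (j : ℕ) = i + 2 → f i ≠ f j

instance [DecidableEq V] [DecidableRel G.Adj] {n : ℕ} : DecidablePred (G.IsNBWalk (n := n)) :=
  fun _ => by unfold IsNBWalk; infer_instance

variable {G}

theorem isNBWalk_fin_one (f : Fin 1 → V) : G.IsNBWalk f :=
  ⟨fun i j h => by simp [Fin.val_eq_zero] at h, fun i j h => by simp [Fin.val_eq_zero] at h⟩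

theorem isNBWalk_snoc {n : ℕ} (g : Fin (n + 1) → V) (v : V) :
    G.IsNBWalk (Fin.snoc g v : Fin (n + 2) → V) ↔
      G.IsNBWalk g ∧ G.Adj (g (Fin.last n)) v ∧ ∀ i : Fin (n + 1), (i : ℕ) + 1 = n → g i ≠ v := by
  have adj_last : (∀ i : Fin (n + 1), (i : ℕ) = n → G.Adj (g i) v) ↔ G.Adj (g (Fin.last n)) v :=
    ⟨fun h => h _ rfl, fun h i hi => by rwa [show i = Fin.last n from Fin.ext hi]⟩
  have beyond (i : Fin (n + 1)) (k : ℕ) : (i : ℕ) ≠ n + 1 + k := by omega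
  simp only [IsNBWalk, Fin.forall_fin_succ' (n := n + 1), Fin.snoc_castSucc, Fin.snoc_last,
    Fin.val_castSucc, Fin.val_last, forall_and, beyond, false_imp_iff, imp_true_iff,
    Nat.add_right_cancel_iff, eq_comm (a := n), adj_last]
  simp only [Nat.add_assoc, Nat.add_eq_left, Nat.reduceAdd, OfNat.ofNat_ne_zero, false_imp_iff,
    and_true]
  tauto

theorem isNBWalk_snoc_fin_one (g : Fin 1 → V) (v : V) :
    G.IsNBWalk (Fin.snoc g v : Fin 2 → V) ↔ G.Adj (g 0) v := by
  simp [isNBWalk_snoc, isNBWalk_fin_one]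

theorem isNBWalk_snoc_succ {n : ℕ} (g : Fin (n + 2) → V) (v : V) :
    G.IsNBWalk (Fin.snoc g v : Fin (n + 3) → V) ↔
      G.IsNBWalk g ∧ G.Adj (g (Fin.last _)) v ∧ g (Fin.last n).castSucc ≠ v := by
  refine (isNBWalk_snoc g v).trans (and_congr_right' (and_congr_right' ⟨fun h => h _ rfl, ?_⟩))
  intro h i hi
  rwa [show i = (Fin.last n).castSucc from Fin.ext (by simp; omega)]

variable [Fintype V] [DecidableEq V] [DecidableRel G.Adj]

theorem card_isNBWalk_snoc_fin_one (h : Fin 1 → V) :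
    #{w | G.IsNBWalk (Fin.snoc h w)} = G.degree (h 0) := by
  simp only [isNBWalk_snoc_fin_one]
  rw [← card_neighborFinset_eq_degree, neighborFinset_eq_filter]

theorem card_isNBWalk_snoc {n : ℕ} {h : Fin (n + 2) → V} (hh : G.IsNBWalk h) :
    #{w | G.IsNBWalk (Fin.snoc h w)} = G.degree (h (Fin.last _)) - 1 := by
  have prev_adj : h (Fin.last n).castSucc ∈ G.neighborFinset (h (Fin.last _)) :=
    (G.mem_neighborFinset _ _).2 (hh.1 _ _ rfl).symm
  rw [← card_neighborFinset_eq_degree, ← card_erase_of_mem prev_adj]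
  congr 1
  ext w
  simp [isNBWalk_snoc_succ, hh, ne_comm, and_comm]

end Walks

variable {V : Type} [Fintype V] [DecidableEq V] {G : SimpleGraph V} [DecidableRel G.Adj]

theorem nbWalkCount_eq_card (t : ℕ) (x y : V) :
    nbWalkCount G t x y = #{f : Fin (t + 1) → V | f 0 = x ∧ f (Fin.last t) = y ∧ G.IsNBWalk f} := by
  refine congrArg card (filter_congr fun f _ => and_congr_right fun _ => and_congr_right fun _ => ?_)
  refine and_congr ⟨fun h i j hij => ?_, fun h i => h _ _ rfl⟩
    ⟨fun h i j hij => ?_, fun h i => h _ _ rfl⟩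
  all_goals
    obtain ⟨i, hi⟩ := i
    obtain ⟨j, hj⟩ := j
    dsimp only at hij
    subst hij
    exact h ⟨i, by omega⟩

theorem nbWalkCount_succ (n : ℕ) (x y : V) :
    nbWalkCount G (n + 1) x y = #{g : Fin (n + 1) → V | g 0 = x ∧ G.IsNBWalk (Fin.snoc g y)} := by
  rw [nbWalkCount_eq_card, Fin.card_filter_snoc, card_filter]
  refine sum_congr rfl fun g _ => ?_
  simp only [Fin.snoc_apply_zero, Fin.snoc_last, and_left_comm (b := _ = y)]
  simp [card_filter, ite_and]

theorem nbWalkCount_zero (x y : V) : nbWalkCount G 0 x y = if x = y then 1 else 0 := by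
  rw [nbWalkCount_eq_card]
  simp only [isNBWalk_fin_one, and_true, Fin.last_zero]
  rw [Fin.card_filter_fin_one fun v => v = x ∧ v = y]
  simp [card_filter, ite_and]

theorem nbWalkCount_one (x y : V) : nbWalkCount G 1 x y = if G.Adj x y then 1 else 0 := by
  rw [nbWalkCount_succ]
  simp only [isNBWalk_snoc_fin_one]
  rw [Fin.card_filter_fin_one fun v => v = x ∧ G.Adj v y]
  simp [card_filter, ite_and]

theorem sum_neighborFinset_nbWalkCount (n : ℕ) (x y : V) :
    ∑ z ∈ G.neighborFinset y, nbWalkCount G (n + 1) x z =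
      nbWalkCount G (n + 2) x y + ∑ h ∈ {h : Fin (n + 1) → V | h 0 = x ∧ h (Fin.last n) = y ∧
        G.IsNBWalk h}, #{w | G.IsNBWalk (Fin.snoc h w)} := by
  set W : Finset (Fin (n + 2) → V) :=
    {f ∈ {f | f 0 = x ∧ G.IsNBWalk f} | f (Fin.last _) ∈ G.neighborFinset y}
  have hsum : ∑ z ∈ G.neighborFinset y, nbWalkCount G (n + 1) x z = #W := by
    rw [← sum_card_fiberwise_eq_card_filter]
    refine sum_congr rfl fun z _ => ?_
    rw [nbWalkCount_eq_card, filter_filter]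
    exact congrArg card (filter_congr fun f _ => by tauto)
  have hnb : #{f ∈ W | f (Fin.last n).castSucc ≠ y} = nbWalkCount G (n + 2) x y := by
    rw [nbWalkCount_succ, filter_filter, filter_filter]
    refine congrArg card (filter_congr fun f _ => ?_)
    rw [isNBWalk_snoc_succ, mem_neighborFinset, G.adj_comm]
    tauto
  have hback : #{f ∈ W | f (Fin.last n).castSucc = y} =
      ∑ h ∈ {h : Fin (n + 1) → V | h 0 = x ∧ h (Fin.last n) = y ∧ G.IsNBWalk h},
        #{w | G.IsNBWalk (Fin.snoc h w)} := by
    rw [filter_filter, filter_filter, Fin.card_filter_snoc, sum_filter]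
    refine sum_congr rfl fun h _ => ?_
    simp only [Fin.snoc_apply_zero, Fin.snoc_last, Fin.snoc_castSucc, isNBWalk_snoc,
      mem_neighborFinset]
    split_ifs with hh
    · obtain ⟨rfl, rfl, hh⟩ := hh
      refine congrArg card (filter_congr fun w _ => ?_)
      rw [G.adj_comm]
      tauto
    · exact card_eq_zero.2 (filter_eq_empty_iff.2 fun w _ => by tauto)
  rw [hsum, ← hnb, ← hback]
  exact (card_filter_add_card_filter_not _).symm.trans (add_comm _ _)

theorem sum_neighborFinset_nbWalkCount_one {d : ℕ} (hreg : G.IsRegularOfDegree d) (x y : V) :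
    ∑ z ∈ G.neighborFinset y, nbWalkCount G 1 x z =
      nbWalkCount G 2 x y + d * nbWalkCount G 0 x y := by
  rw [sum_neighborFinset_nbWalkCount, nbWalkCount_eq_card 0 x y, mul_comm,
    sum_const_nat fun h hh => ?_]
  simp only [mem_filter, mem_univ, true_and, Fin.last_zero] at hh
  rw [card_isNBWalk_snoc_fin_one, hh.2.1, hreg]

theorem sum_neighborFinset_nbWalkCount_add_two {p : ℕ} (hreg : G.IsRegularOfDegree (p + 1))
    (n : ℕ) (x y : V) :
    ∑ z ∈ G.neighborFinset y, nbWalkCount G (n + 2) x z =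
      nbWalkCount G (n + 3) x y + p * nbWalkCount G (n + 1) x y := by
  rw [sum_neighborFinset_nbWalkCount, nbWalkCount_eq_card (n + 1) x y, mul_comm,
    sum_const_nat fun h hh => ?_]
  simp only [mem_filter, mem_univ, true_and] at hh
  rw [card_isNBWalk_snoc hh.2.2, hh.2.1, hreg, Nat.add_sub_cancel]

variable (G) (R : Type*) [Ring R]

def nbWalkMatrix (t : ℕ) : Matrix V V R := Matrix.of fun x y => (nbWalkCount G t x y : R)

theorem nbWalkMatrix_zero : G.nbWalkMatrix R 0 = 1 := by
  ext x y
  simp [nbWalkMatrix, nbWalkCount_zero, Matrix.one_apply]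

theorem nbWalkMatrix_one : G.nbWalkMatrix R 1 = G.adjMatrix R := by
  ext x y
  simp [nbWalkMatrix, nbWalkCount_one, adjMatrix_apply]

theorem nbWalkMatrix_two {d : ℕ} (hreg : G.IsRegularOfDegree d) :
    G.nbWalkMatrix R 2 = G.nbWalkMatrix R 1 * G.adjMatrix R - (d : R) • G.nbWalkMatrix R 0 := by
  ext x y
  simp only [Matrix.sub_apply, mul_adjMatrix_apply, Matrix.smul_apply, nbWalkMatrix,
    Matrix.of_apply, smul_eq_mul, eq_sub_iff_add_eq]
  exact_mod_cast congrArg (Nat.cast : ℕ → R) (sum_neighborFinset_nbWalkCount_one hreg x y).symm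

theorem nbWalkMatrix_add_three {p : ℕ} (hreg : G.IsRegularOfDegree (p + 1)) (n : ℕ) :
    G.nbWalkMatrix R (n + 3) =
      G.nbWalkMatrix R (n + 2) * G.adjMatrix R - (p : R) • G.nbWalkMatrix R (n + 1) := by
  ext x y
  simp only [Matrix.sub_apply, mul_adjMatrix_apply, Matrix.smul_apply, nbWalkMatrix,
    Matrix.of_apply, smul_eq_mul, eq_sub_iff_add_eq]
  exact_mod_cast
    congrArg (Nat.cast : ℕ → R) (sum_neighborFinset_nbWalkCount_add_two hreg n x y).symm

end SimpleGraph

theorem Polynomial.pow_smul_comp_C_mul_X_add_two {R : Type*} [CommRing R] {F : ℕ → R[X]}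
    (hF : ∀ n, F (n + 2) = 2 * X * F (n + 1) - F n) {s c : R} (hsc : 2 * c * s = 1) (n : ℕ) :
    s ^ (n + 2) • (F (n + 2)).comp (C c * X) =
      s ^ (n + 1) • (F (n + 1)).comp (C c * X) * X - s ^ 2 • s ^ n • (F n).comp (C c * X) := by
  have hsc' : 2 * C c * C s = (1 : R[X]) := by
    rw [← C_ofNat, ← C_mul, ← C_mul, hsc, C_1]
  simp only [hF, sub_comp, mul_comp, ofNat_comp, X_comp, smul_eq_C_mul, C_pow]
  linear_combination (C s ^ (n + 1) * X * (F (n + 1)).comp (C c * X)) * hsc'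

-- The polynomial `Q_t` of the statement, with the parameter `p` taken real.
noncomputable def nbWalkPoly (r : ℝ) (t : ℕ) : ℝ[X] :=
  Real.sqrt r ^ t •
    (((r - 1) / r) • (Chebyshev.U ℝ t).comp (C (1 / (2 * Real.sqrt r)) * X) +
      (2 / r) • (Chebyshev.T ℝ t).comp (C (1 / (2 * Real.sqrt r)) * X))

theorem nbWalkPoly_zero (r : ℝ) : nbWalkPoly r 0 = ((r + 1) / r) • 1 := by
  simp only [nbWalkPoly, pow_zero, one_smul, Nat.cast_zero, Chebyshev.U_zero, Chebyshev.T_zero,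
    one_comp, ← add_smul]
  ring_nf

theorem nbWalkPoly_one {r : ℝ} (hr : 0 < r) : nbWalkPoly r 1 = X := by
  have coeff : Real.sqrt r * ((r - 1) / r * 2 * (1 / (2 * Real.sqrt r)) +
      2 / r * (1 / (2 * Real.sqrt r))) = 1 := by
    field_simp [(Real.sqrt_pos.2 hr).ne']
    ring
  simp only [nbWalkPoly, pow_one, Nat.cast_one, Chebyshev.U_one, Chebyshev.T_one, mul_comp,
    ofNat_comp, X_comp, smul_eq_C_mul]
  conv_rhs => rw [← one_mul X, ← C_1, ← coeff]
  simp only [C_mul, C_add, C_ofNat]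
  ring

theorem nbWalkPoly_add_two {r : ℝ} (hr : 0 < r) (n : ℕ) :
    nbWalkPoly r (n + 2) = nbWalkPoly r (n + 1) * X - r • nbWalkPoly r n := by
  have hsc : 2 * (1 / (2 * Real.sqrt r)) * Real.sqrt r = 1 := by
    field_simp [(Real.sqrt_pos.2 hr).ne']
  have hU := pow_smul_comp_C_mul_X_add_two (F := fun n => Chebyshev.U ℝ n)
    (fun n => by exact_mod_cast Chebyshev.U_add_two ℝ n) hsc n
  have hT := pow_smul_comp_C_mul_X_add_two (F := fun n => Chebyshev.T ℝ n)
    (fun n => by exact_mod_cast Chebyshev.T_add_two ℝ n) hsc n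
  rw [Real.sq_sqrt hr.le] at hU hT
  simp only [nbWalkPoly, smul_add, smul_comm (Real.sqrt r ^ _) ((r - 1) / r),
    smul_comm (Real.sqrt r ^ _) (2 / r)]
  rw [hU, hT]
  simp only [smul_eq_C_mul]
  ring

theorem nbWalkMatrix_eq_aeval_nbWalkPoly {V : Type} [Fintype V] [DecidableEq V]
    (G : SimpleGraph V) [DecidableRel G.Adj] {p : ℕ} (hp : 0 < p)
    (hreg : G.IsRegularOfDegree (p + 1)) (t : ℕ) :
    G.nbWalkMatrix ℝ (t + 1) = aeval (G.adjMatrix ℝ) (nbWalkPoly p (t + 1)) := by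
  have hr : (0 : ℝ) < p := by exact_mod_cast hp
  induction t using Nat.twoStepInduction with
  | zero => rw [G.nbWalkMatrix_one, nbWalkPoly_one hr, aeval_X]
  | one =>
    rw [G.nbWalkMatrix_two ℝ hreg, G.nbWalkMatrix_one, G.nbWalkMatrix_zero,
      nbWalkPoly_add_two hr, nbWalkPoly_one hr, nbWalkPoly_zero, map_sub, map_mul, map_smul,
      map_smul, aeval_X, map_one, smul_smul, mul_div_cancel₀ _ hr.ne']
    push_cast
    rfl
  | more n ih₀ ih₁ =>
    rw [G.nbWalkMatrix_add_three ℝ hreg, ih₀, ih₁, nbWalkPoly_add_two hr (n + 1), map_sub,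
      map_mul, map_smul, aeval_X]

theorem nbWalkCount_eq_Q_eval {V : Type} [Fintype V] [DecidableEq V]
    (G : SimpleGraph V) [DecidableRel G.Adj] (p : ℕ) (hp : 2 ≤ p)
    (hreg : G.IsRegularOfDegree (p + 1)) (t : ℕ) (ht : 2 ≤ t) (x y : V) :
    (nbWalkCount G t x y : ℝ) =
      (Polynomial.aeval (G.adjMatrix ℝ))
        (Real.sqrt p ^ t •
          ((((p : ℝ) - 1) / p) • (Polynomial.Chebyshev.U ℝ t).comp
              (Polynomial.C (1 / (2 * Real.sqrt p)) * Polynomial.X) +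
            ((2 : ℝ) / p) • (Polynomial.Chebyshev.T ℝ t).comp
              (Polynomial.C (1 / (2 * Real.sqrt p)) * Polynomial.X))) x y := by
  obtain ⟨s, rfl⟩ : ∃ s, t = s + 1 := ⟨t - 1, by omega⟩
  exact congrFun₂ (nbWalkMatrix_eq_aeval_nbWalkPoly G (by omega) hreg s) x y
end

section
/- The polynomials R_t(θ) = ((p−1)/p)·sin((t+1)θ)/sin θ + (2/p)·cos(tθ) satisfy ∫₀^π R_t(θ)² dν_p(θ) = (p+1)/p for every t ≥ 1, where dν_p = (2(p+1) sin²θ)/(π[(p^{1/2}+p^{−1/2})² − 4cos²θ]) dθ is the Kesten–Plancherel measure. -/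
/-!
Multiplying `R_t` by `sin θ` turns it into `sin ((t + 1) θ) - p⁻¹ sin ((t - 1) θ)`, and the Kesten
density becomes `2 (p + 1) sin² θ / (π (p + p⁻¹ - 2 cos 2θ))`. Expanding the square, the integral
reduces to the cosine coefficients `c m = ∫₀^π cos (2 m θ) / (p + p⁻¹ - 2 cos 2θ) dθ`. These satisfy
`c (m + 2) = (p + p⁻¹) c (m + 1) - c m`, a recurrence with characteristic roots `p` and `p⁻¹`; since
they are bounded, `c (m + 1) = p⁻¹ c m`, and this makes every non-constant term cancel.
-/

open Real

-- `x (m + 1) - p⁻¹ x m` is multiplied by `p` at each step, so boundedness forces it to vanish.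
theorem eq_inv_mul_of_recurrence_of_bounded {p : ℝ} (hp : 1 < p) {x : ℕ → ℝ}
    (hrec : ∀ m, x (m + 2) = (p + p⁻¹) * x (m + 1) - x m) {C : ℝ} (hC : ∀ m, |x m| ≤ C)
    (m : ℕ) : x (m + 1) = p⁻¹ * x m := by
  have hp0 : 0 < p := by linarith
  set K : ℕ → ℝ := fun m => x (m + 1) - p⁻¹ * x m with hK
  have hK_succ (m : ℕ) : K (m + 1) = p * K m := by
    simp only [hK, hrec]
    field_simp
    ring
  have hK_pow (m : ℕ) : K m = p ^ m * K 0 := by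
    induction m with
    | zero => simp
    | succ m ih => rw [hK_succ, ih, pow_succ]; ring
  have hK_bdd (m : ℕ) : p ^ m * |K 0| ≤ (1 + p⁻¹) * C :=
    calc p ^ m * |K 0| = |K m| := by rw [hK_pow m, abs_mul, abs_of_pos (pow_pos hp0 m)]
      _ ≤ |x (m + 1)| + p⁻¹ * |x m| := by
        rw [← abs_of_pos (inv_pos.mpr hp0), ← abs_mul]
        exact abs_sub _ _
      _ ≤ (1 + p⁻¹) * C := by
        have := hC m
        have := hC (m + 1)
        have : 0 < p⁻¹ := by positivity
        nlinarith
  have hK0 : K 0 = 0 := by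
    by_contra h
    obtain ⟨n, hn⟩ := pow_unbounded_of_one_lt ((1 + p⁻¹) * C / |K 0|) hp
    rw [div_lt_iff₀ (abs_pos.mpr h)] at hn
    linarith [hK_bdd n]
  have := hK_pow m
  rw [hK0, mul_zero] at this
  exact sub_eq_zero.mp this

theorem two_lt_add_inv {p : ℝ} (hp0 : 0 < p) (hp1 : p ≠ 1) : 2 < p + p⁻¹ := by
  have h : p + p⁻¹ - 2 = (p - 1) ^ 2 / p := by field_simp; ring
  have : 0 < (p - 1) ^ 2 / p := div_pos (sq_pos_of_ne_zero (sub_ne_zero.mpr hp1)) hp0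
  linarith

theorem add_inv_sub_two_mul_cos_pos {p : ℝ} (hp0 : 0 < p) (hp1 : p ≠ 1) (x : ℝ) :
    0 < p + p⁻¹ - 2 * cos x := by
  linarith [two_lt_add_inv hp0 hp1, cos_le_one x]

theorem rpow_half_add_rpow_neg_half_sq {p : ℝ} (hp : 0 < p) :
    (p ^ ((1 : ℝ) / 2) + p ^ (-(1 : ℝ) / 2)) ^ 2 = p + p⁻¹ + 2 := by
  rw [neg_div, rpow_neg hp.le, ← sqrt_eq_rpow]
  have hs : 0 < √p := sqrt_pos.mpr hp
  have := sq_sqrt hp.le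
  field_simp
  rw [this]
  ring

theorem integral_cos_two_mul_nat_mul {k : ℕ} (hk : k ≠ 0) :
    ∫ θ in (0 : ℝ)..π, cos (2 * k * θ) = 0 := by
  have h2k : (2 * k : ℝ) ≠ 0 := by positivity
  rw [intervalIntegral.integral_comp_mul_left cos h2k, integral_cos, mul_zero, sin_zero,
    show 2 * (k : ℝ) * π = ((2 * k : ℕ) : ℝ) * π by push_cast; ring, sin_nat_mul_pi]
  simp

theorem cos_two_mul_nat_add_two_mul (m : ℕ) (θ : ℝ) :
    cos (2 * (m + 2 : ℕ) * θ) = 2 * cos (2 * θ) * cos (2 * (m + 1 : ℕ) * θ) - cos (2 * m * θ) := by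
  rw [show 2 * ((m + 2 : ℕ) : ℝ) * θ = 2 * (m + 1 : ℕ) * θ + 2 * θ by push_cast; ring,
    show 2 * (m : ℝ) * θ = 2 * (m + 1 : ℕ) * θ - 2 * θ by push_cast; ring, cos_add, cos_sub]
  ring

theorem sin_add_sub_inv_mul_sin_sub_sq {p : ℝ} (hp : p ≠ 0) (x θ : ℝ) :
    (sin (x + θ) - p⁻¹ * sin (x - θ)) ^ 2 =
      p⁻¹ / 2 * (p + p⁻¹ - 2 * cos (2 * θ)) - 1 / 2 * cos (2 * (x + θ))
        + p⁻¹ * cos (2 * x) - p⁻¹ ^ 2 / 2 * cos (2 * (x - θ)) := by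
  rw [show 2 * θ = (x + θ) - (x - θ) by ring, show 2 * x = (x + θ) + (x - θ) by ring,
    cos_sub (x + θ), cos_add (x + θ), cos_two_mul (x + θ), cos_two_mul (x - θ), cos_sq' (x + θ),
    cos_sq' (x - θ)]
  linear_combination (-1 / 2 : ℝ) * mul_inv_cancel₀ hp

theorem kesten_R_mul_sin {p : ℝ} (hp : p ≠ 0) (t : ℕ) (θ : ℝ) :
    ((p - 1) / p * (sin ((t + 1) * θ) / sin θ) + 2 / p * cos (t * θ)) * sin θ =
      sin ((t + 1) * θ) - p⁻¹ * sin ((t - 1) * θ) := by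
  have hU : sin ((t + 1) * θ) = (Polynomial.Chebyshev.U ℝ t).eval (cos θ) * sin θ := by
    exact_mod_cast (Polynomial.Chebyshev.U_real_cos θ t).symm
  rw [add_mul, mul_assoc, div_mul_cancel_of_imp fun h => by rw [hU, h, mul_zero],
    add_mul, sub_mul, one_mul, sin_add, sin_sub]
  field_simp
  ring

noncomputable def kestenCosCoeff (p : ℝ) (m : ℕ) : ℝ :=
  ∫ θ in (0 : ℝ)..π, cos (2 * m * θ) / (p + p⁻¹ - 2 * cos (2 * θ))

section KestenCosCoeff

variable {p : ℝ}

theorem intervalIntegrable_div_add_inv_sub_two_mul_cos (hp : 1 < p) {f : ℝ → ℝ}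
    (hf : Continuous f) (a b : ℝ) :
    IntervalIntegrable (fun θ => f θ / (p + p⁻¹ - 2 * cos (2 * θ))) MeasureTheory.volume a b :=
  (hf.div (by fun_prop) fun θ =>
    (add_inv_sub_two_mul_cos_pos (by linarith) hp.ne' _).ne').intervalIntegrable a b

theorem kestenCosCoeff_add_two (hp : 1 < p) (m : ℕ) :
    kestenCosCoeff p (m + 2) = (p + p⁻¹) * kestenCosCoeff p (m + 1) - kestenCosCoeff p m := by
  have hcos (θ : ℝ) : cos (2 * (m + 2 : ℕ) * θ) / (p + p⁻¹ - 2 * cos (2 * θ)) =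
      (p + p⁻¹) * (cos (2 * (m + 1 : ℕ) * θ) / (p + p⁻¹ - 2 * cos (2 * θ)))
        - cos (2 * (m + 1 : ℕ) * θ) - cos (2 * m * θ) / (p + p⁻¹ - 2 * cos (2 * θ)) := by
    have hP := (add_inv_sub_two_mul_cos_pos (by linarith) hp.ne' (2 * θ)).ne'
    set P := p + p⁻¹ - 2 * cos (2 * θ)
    rw [cos_two_mul_nat_add_two_mul, show 2 * cos (2 * θ) = p + p⁻¹ - P by ring]
    field_simp
  have hint (k : ℕ) := intervalIntegrable_div_add_inv_sub_two_mul_cos hp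
    (by fun_prop : Continuous fun θ : ℝ => cos (2 * (k : ℝ) * θ)) 0 π
  have hcos_int : IntervalIntegrable (fun θ : ℝ => cos (2 * (m + 1 : ℕ) * θ))
      MeasureTheory.volume 0 π :=
    (by fun_prop : Continuous fun θ : ℝ => cos (2 * ((m + 1 : ℕ) : ℝ) * θ)).intervalIntegrable 0 π
  unfold kestenCosCoeff
  rw [intervalIntegral.integral_congr fun θ _ => hcos θ,
    intervalIntegral.integral_sub (((hint _).const_mul _).sub hcos_int) (hint _),
    intervalIntegral.integral_sub ((hint _).const_mul _) hcos_int,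
    intervalIntegral.integral_const_mul, integral_cos_two_mul_nat_mul m.succ_ne_zero, sub_zero]

theorem abs_kestenCosCoeff_le (hp : 1 < p) (m : ℕ) :
    |kestenCosCoeff p m| ≤ (p + p⁻¹ - 2)⁻¹ * π := by
  have h2 := two_lt_add_inv (by linarith) hp.ne'
  have hbound (θ : ℝ) :
      ‖cos (2 * m * θ) / (p + p⁻¹ - 2 * cos (2 * θ))‖ ≤ (p + p⁻¹ - 2)⁻¹ := by
    have hP := add_inv_sub_two_mul_cos_pos (by linarith) hp.ne' (2 * θ)
    rw [Real.norm_eq_abs, abs_div, abs_of_pos hP, div_le_iff₀ hP]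
    calc |cos (2 * m * θ)| ≤ 1 := abs_cos_le_one _
      _ = (p + p⁻¹ - 2)⁻¹ * (p + p⁻¹ - 2) := (inv_mul_cancel₀ (by linarith)).symm
      _ ≤ (p + p⁻¹ - 2)⁻¹ * (p + p⁻¹ - 2 * cos (2 * θ)) := by
        gcongr
        linarith [cos_le_one (2 * θ)]
  have := intervalIntegral.norm_integral_le_of_norm_le_const (a := 0) (b := π)
    fun θ _ => hbound θ
  rwa [sub_zero, abs_of_nonneg pi_nonneg] at this

theorem kestenCosCoeff_succ (hp : 1 < p) (m : ℕ) :
    kestenCosCoeff p (m + 1) = p⁻¹ * kestenCosCoeff p m :=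
  eq_inv_mul_of_recurrence_of_bounded hp (kestenCosCoeff_add_two hp) (abs_kestenCosCoeff_le hp) m

theorem integral_sin_sub_inv_mul_sin_sq_div (hp : 1 < p) {t : ℕ} (ht : 1 ≤ t) :
    ∫ θ in (0 : ℝ)..π,
        (sin ((t + 1) * θ) - p⁻¹ * sin ((t - 1) * θ)) ^ 2 / (p + p⁻¹ - 2 * cos (2 * θ))
      = π / (2 * p) := by
  obtain ⟨m, rfl⟩ : ∃ m, t = m + 1 := ⟨t - 1, by omega⟩
  have hp0 : p ≠ 0 := by positivity
  have hexpand (θ : ℝ) :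
      (sin ((↑(m + 1) + 1) * θ) - p⁻¹ * sin ((↑(m + 1) - 1) * θ)) ^ 2
          / (p + p⁻¹ - 2 * cos (2 * θ)) =
        p⁻¹ / 2 - 1 / 2 * (cos (2 * ↑(m + 2) * θ) / (p + p⁻¹ - 2 * cos (2 * θ)))
        + p⁻¹ * (cos (2 * ↑(m + 1) * θ) / (p + p⁻¹ - 2 * cos (2 * θ)))
        - p⁻¹ ^ 2 / 2 * (cos (2 * m * θ) / (p + p⁻¹ - 2 * cos (2 * θ))) := by
    have hP := (add_inv_sub_two_mul_cos_pos (by linarith) hp.ne' (2 * θ)).ne'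
    rw [add_mul, sub_mul, one_mul, sin_add_sub_inv_mul_sin_sub_sq hp0,
      show 2 * (↑(m + 1) * θ + θ) = 2 * ↑(m + 2) * θ by push_cast; ring,
      show 2 * (↑(m + 1) * θ - θ) = 2 * m * θ by push_cast; ring, mul_assoc 2]
    set P := p + p⁻¹ - 2 * cos (2 * θ)
    field_simp
  have hint (k : ℕ) := intervalIntegrable_div_add_inv_sub_two_mul_cos hp
    (by fun_prop : Continuous fun θ : ℝ => cos (2 * (k : ℝ) * θ)) 0 π
  rw [intervalIntegral.integral_congr fun θ _ => hexpand θ,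
    intervalIntegral.integral_sub (((intervalIntegrable_const.sub ((hint _).const_mul _)).add
      ((hint _).const_mul _))) ((hint _).const_mul _),
    intervalIntegral.integral_add (intervalIntegrable_const.sub ((hint _).const_mul _))
      ((hint _).const_mul _),
    intervalIntegral.integral_sub intervalIntegrable_const ((hint _).const_mul _)]
  simp only [intervalIntegral.integral_const_mul, intervalIntegral.integral_const, sub_zero,
    smul_eq_mul]
  change _ - 1 / 2 * kestenCosCoeff p (m + 2) + p⁻¹ * kestenCosCoeff p (m + 1)
    - p⁻¹ ^ 2 / 2 * kestenCosCoeff p m = _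
  rw [kestenCosCoeff_succ hp (m + 1), kestenCosCoeff_succ hp m]
  field_simp
  ring

end KestenCosCoeff

theorem R_t_kesten_norm (p : ℝ) (hp : 1 < p) (t : ℕ) (ht : 1 ≤ t) :
    ∫ θ in (0 : ℝ)..Real.pi,
        (((p - 1) / p) * (Real.sin (((t : ℝ) + 1) * θ) / Real.sin θ) +
            (2 / p) * Real.cos ((t : ℝ) * θ)) ^ 2 *
          (2 * (p + 1) * Real.sin θ ^ 2 /
            (Real.pi * ((p ^ ((1 : ℝ) / 2) + p ^ (-(1 : ℝ) / 2)) ^ 2 -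
              4 * Real.cos θ ^ 2))) = (p + 1) / p := by
  have hp0 : 0 < p := by linarith
  have hden (θ : ℝ) :
      (p ^ ((1 : ℝ) / 2) + p ^ (-(1 : ℝ) / 2)) ^ 2 - 4 * cos θ ^ 2 = p + p⁻¹ - 2 * cos (2 * θ) := by
    rw [rpow_half_add_rpow_neg_half_sq hp0, cos_sq θ]
    ring
  rw [intervalIntegral.integral_congr (g := fun θ => 2 * (p + 1) / π *
      ((sin ((t + 1) * θ) - p⁻¹ * sin ((t - 1) * θ)) ^ 2 / (p + p⁻¹ - 2 * cos (2 * θ))))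
      fun θ _ => by
        dsimp only
        rw [hden, div_mul_eq_div_div, ← kesten_R_mul_sin hp0.ne']
        ring,
    intervalIntegral.integral_const_mul, integral_sin_sub_inv_mul_sin_sq_div hp ht]
  field_simp
end
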